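/- Let G be a finite group, A a finite set of size q ≥ 2, and H ≤ G. If the set B_{[H]} = {x ∈ A^G : G_x conjugate to H} is nonempty and consists of a single G-orbit, then q divides the index [G : H]. -/

import Mathlib

/-- The right action of `G` on configurations `A^G`: `(x · g) h = x (h g⁻¹)`. -/
def confMul {G A : Type*} [Group G] (x : G → A) (g : G) : G → A := fun h => x (h * g⁻¹)

/-- The `G`-orbit of a configuration `x ∈ A^G`. -/
def orbitOf {G A : Type*} [Group G] (x : G → A) : Set (G → A) := {y | ∃ g : G, y = confMul x g}

/-- The block `B_{[H]}` of configurations whose stabiliser is conjugate to `H`. -/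
def blockOf {G A : Type*} [Group G] (H : Subgroup G) : Set (G → A) :=
  {x | ∃ g : G, ∀ h : G, confMul x h = x ↔ g * h * g⁻¹ ∈ H}

/-!
Let `x` generate the orbit `B_{[H]}`. Relabelling the colours of `x` by a transposition `(a b)`
does not change its stabiliser `G_x`, so the relabelled configuration lies in `B_{[H]}`, hence
is a translate of `x`; thus all fibres of `x` have the same size and `|G| = q · |x⁻¹(a)|`.
Each fibre is a union of left cosets of `G_x`, which is conjugate to `H`, so `|G_x|` divides
`|x⁻¹(a)|` and `q` divides `|G| / |G_x| = [G : H]`.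
-/

open Function Pointwise

theorem Nat.card_eq_mul_of_card_fiber_eq {α β : Type*} [Finite α] [Fintype β] {f : α → β}
    {n : ℕ} (hf : ∀ b, Nat.card (f ⁻¹' {b}) = n) : Nat.card α = Nat.card β * n := by
  rw [← Nat.card_congr (Equiv.sigmaFiberEquiv f), Nat.card_sigma, Nat.card_eq_fintype_card]
  exact (Finset.sum_congr rfl fun b _ => hf b).trans (by simp)

theorem Subgroup.card_dvd_card_of_mul_mem {G : Type*} [Group G] (K : Subgroup G) {s : Set G}
    (hs : ∀ g ∈ s, ∀ k ∈ K, g * k ∈ s) : Nat.card K ∣ Nat.card s := by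
  have hsK : s * (K : Set G) = s := by
    refine subset_antisymm ?_ fun g hg => ⟨g, hg, 1, K.one_mem, mul_one g⟩
    rintro _ ⟨g, hg, k, hk, rfl⟩
    exact hs g hg k hk
  rw [← hsK, K.card_mul_eq_card_subgroup_mul_card_quotient]
  exact dvd_mul_right _ _

section Configurations

variable {G A B : Type*} [Group G]

theorem confMul_one (x : G → A) : confMul x 1 = x := by
  funext h; simp [confMul]

theorem confMul_mul (x : G → A) (g h : G) : confMul x (g * h) = confMul (confMul x g) h := by
  funext k; simp [confMul, mul_assoc]

theorem confMul_comp (f : A → B) (x : G → A) (g : G) : confMul (f ∘ x) g = f ∘ confMul x g :=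
  rfl

theorem mem_orbitOf_self (x : G → A) : x ∈ orbitOf x :=
  ⟨1, (confMul_one x).symm⟩

theorem card_preimage_confMul (x : G → A) (g : G) (s : Set A) :
    Nat.card (confMul x g ⁻¹' s) = Nat.card (x ⁻¹' s) :=
  Nat.card_preimage_of_injective (s := x ⁻¹' s) (Equiv.mulRight g⁻¹).injective
    ((Equiv.mulRight g⁻¹).surjective.range_eq ▸ Set.subset_univ _)

/-- The stabiliser `G_x`. -/
def confStab (x : G → A) : Subgroup G where
  carrier := {g | confMul x g = x}
  one_mem' := confMul_one x
  mul_mem' {g h} hg hh := by simp_all [confMul_mul]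
  inv_mem' {g} hg := by
    change confMul x g⁻¹ = x
    conv_lhs => rw [← hg, ← confMul_mul, mul_inv_cancel, confMul_one]

theorem mem_confStab {x : G → A} {g : G} : g ∈ confStab x ↔ confMul x g = x :=
  Iff.rfl

theorem apply_mul_of_mem_confStab {x : G → A} {k : G} (hk : k ∈ confStab x) (g : G) :
    x (g * k) = x g := by
  simpa [confMul] using congrFun ((confStab x).inv_mem hk) g

theorem index_confStab_of_mem_blockOf {H : Subgroup G} {x : G → A} (hx : x ∈ blockOf H) :
    (confStab x).index = H.index := by
  obtain ⟨g, hg⟩ := hx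
  have : confStab x = H.comap (MulAut.conj g).toMonoidHom := by
    ext h; simp [mem_confStab, hg, MulAut.conj_apply]
  rw [this, H.index_comap_of_surjective (MulAut.conj g).surjective]

theorem comp_mem_blockOf {H : Subgroup G} {x : G → A} (hx : x ∈ blockOf H) {f : A → B}
    (hf : Injective f) : f ∘ x ∈ blockOf H := by
  obtain ⟨g, hg⟩ := hx
  exact ⟨g, fun h => by rw [confMul_comp, hf.comp_left.eq_iff, hg]⟩

theorem card_fiber_eq_of_blockOf_eq_orbitOf [DecidableEq A] {H : Subgroup G} {x : G → A}
    (hx : blockOf H = orbitOf x) (a b : A) :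
    Nat.card (x ⁻¹' {a}) = Nat.card (x ⁻¹' {b}) := by
  have hswap : Equiv.swap a b ∘ x ∈ orbitOf x :=
    hx ▸ comp_mem_blockOf (hx ▸ mem_orbitOf_self x) (Equiv.swap a b).injective
  obtain ⟨g, hg⟩ := hswap
  have : x ⁻¹' {b} = confMul x g ⁻¹' {a} := by
    rw [← hg]; ext; simp [Equiv.swap_apply_eq_iff]
  rw [this, card_preimage_confMul]

end Configurations

theorem stmt19_general {G A : Type*} [Group G] [Fintype G] [Fintype A]
    (H : Subgroup G)
    (h1 : ∃ x : G → A, blockOf H = orbitOf x) :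
    Fintype.card A ∣ H.index := by
  classical
  obtain ⟨x, hx⟩ := h1
  have hmem : x ∈ blockOf H := hx ▸ mem_orbitOf_self x
  set a := x 1
  have hG : Nat.card G = Nat.card A * Nat.card (x ⁻¹' {a}) :=
    Nat.card_eq_mul_of_card_fiber_eq fun b => card_fiber_eq_of_blockOf_eq_orbitOf hx b a
  obtain ⟨m, hm⟩ : Nat.card (confStab x) ∣ Nat.card (x ⁻¹' {a}) :=
    (confStab x).card_dvd_card_of_mul_mem fun g hg k hk => by
      simpa [apply_mul_of_mem_confStab hk] using hg
  have hindex : (confStab x).index = Nat.card A * m := by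
    apply Nat.eq_of_mul_eq_mul_left (Nat.card_pos (α := confStab x))
    rw [Subgroup.card_mul_index, hG, hm]; ring
  rw [← index_confStab_of_mem_blockOf hmem, hindex, Nat.card_eq_fintype_card]
  exact dvd_mul_right _ _

/-- If the block `B_{[H]}` is nonempty and consists of a single `G`-orbit, then
`q = |A|` divides the index `[G : H]`. -/
theorem stmt19 {G A : Type*} [Group G] [Fintype G] [Fintype A]
    (hA : 2 ≤ Fintype.card A) (H : Subgroup G)
    (h1 : ∃ x : G → A, blockOf H = orbitOf x) :
    Fintype.card A ∣ H.index :=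
  stmt19_general H h1
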